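/- Let s := ∑_{j=1}^d σ_j², λ̄ := max_{1 ≤ j ≤ d} λ_j, μ̄ > 0, p, r > 0, h ≥ 0 and c ≤ 0, and set Λ := (p s + μ̄) / ((p+r) s + μ̄). If h + r c² ≤ 1/λ̄, then inf_{z ∈ ℝ} { F₀(h + r z² + p(z − c)²) + μ̄ (z⁻ + c)² } = (h + r Λ c²) s, and the infimum is attained at z = Λ c. -/

import Mathlib

/-! Below the level `1/λ̄` every `φ(λ_j q)` is in its linear branch, so `F₀(q) = s q` there, and
above it `F₀(q) ≥ s (h + r c²)` because `φ(x) ≥ min x 1`. On the linear branch the objective is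
the quadratic `s (h + r z² + p (z - c)²) + μ̄ (z⁻ + c)²`, which for `z ≤ 0` completes to
`((p + r) s + μ̄) (z - Λ c)² + (h + r Λ c²) s`; for `z > 0` it only gets larger, and the branch
above `1/λ̄` cannot do better since `Λ ≤ 1`. -/

open Finset

noncomputable def phi (ε x : ℝ) : ℝ :=
  if x ≤ 1 then x else if x < (ε ^ 2)⁻¹ then 2 * √x - 1 else ε * x + ε⁻¹ - 1

theorem phi_of_le_one {ε x : ℝ} (hx : x ≤ 1) : phi ε x = x := if_pos hx

theorem min_le_phi {ε : ℝ} (hε0 : 0 < ε) (hε1 : ε ≤ 1) (x : ℝ) : min x 1 ≤ phi ε x := by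
  have hmin := min_le_right x 1
  unfold phi
  split_ifs with hx1 hxε
  · exact min_le_left x 1
  · have : 1 ≤ √x := Real.one_le_sqrt.2 (not_le.1 hx1).le
    linarith
  · have hεx : ε⁻¹ ≤ ε * x :=
      calc ε⁻¹ = ε * (ε ^ 2)⁻¹ := by field_simp
        _ ≤ ε * x := mul_le_mul_of_nonneg_left (not_lt.1 hxε) hε0.le
    linarith [(one_le_inv₀ hε0).2 hε1]

theorem mul_le_one_of_le_one_div {a b t : ℝ} (ha : 0 ≤ a) (hab : a ≤ b) (hb : 0 < b)
    (ht : t ≤ 1 / b) : a * t ≤ 1 :=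
  calc a * t ≤ a * (1 / b) := mul_le_mul_of_nonneg_left ht ha
    _ ≤ b * (1 / b) := mul_le_mul_of_nonneg_right hab (by positivity)
    _ = 1 := mul_one_div_cancel hb.ne'

section WeightedSum

variable {ι : Type*} [Fintype ι] {w lam : ι → ℝ} {ε : ℝ}

theorem sum_div_mul_phi_of_le_one {q : ℝ} (hlam : ∀ j, lam j ≠ 0) (hq : ∀ j, lam j * q ≤ 1) :
    ∑ j, w j / lam j * phi ε (lam j * q) = (∑ j, w j) * q := by
  rw [sum_mul]
  refine sum_congr rfl fun j _ => ?_
  rw [phi_of_le_one (hq j)]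
  field_simp [hlam j]

theorem sum_mul_le_sum_div_mul_phi {t q : ℝ} (hε0 : 0 < ε) (hε1 : ε ≤ 1) (hw : ∀ j, 0 ≤ w j)
    (hlam : ∀ j, 0 < lam j) (ht : ∀ j, lam j * t ≤ 1) (htq : t ≤ q) :
    (∑ j, w j) * t ≤ ∑ j, w j / lam j * phi ε (lam j * q) := by
  rw [sum_mul]
  refine sum_le_sum fun j _ => ?_
  have hphi : lam j * t ≤ phi ε (lam j * q) :=
    (le_min (mul_le_mul_of_nonneg_left htq (hlam j).le) (ht j)).trans (min_le_phi hε0 hε1 _)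
  calc w j * t = w j / lam j * (lam j * t) := by field_simp [(hlam j).ne']
    _ ≤ w j / lam j * phi ε (lam j * q) :=
      mul_le_mul_of_nonneg_left hphi (div_nonneg (hw j) (hlam j).le)

end WeightedSum

noncomputable def shrinkFactor (p r s μ : ℝ) : ℝ := (p * s + μ) / ((p + r) * s + μ)

section ShrinkFactor

variable {p r s μ : ℝ}

theorem shrinkFactor_mul_denom (hp : 0 ≤ p) (hr : 0 ≤ r) (hs : 0 ≤ s) (hμ : 0 < μ) :
    shrinkFactor p r s μ * ((p + r) * s + μ) = p * s + μ :=
  div_mul_cancel₀ _ (by positivity)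

theorem shrinkFactor_nonneg (hp : 0 ≤ p) (hr : 0 ≤ r) (hs : 0 ≤ s) (hμ : 0 ≤ μ) :
    0 ≤ shrinkFactor p r s μ := by
  unfold shrinkFactor
  positivity

theorem shrinkFactor_le_one (hp : 0 ≤ p) (hr : 0 ≤ r) (hs : 0 ≤ s) (hμ : 0 ≤ μ) :
    shrinkFactor p r s μ ≤ 1 :=
  div_le_one_of_le₀ (by nlinarith) (by positivity)

theorem cost_shrinkFactor_le (hp : 0 ≤ p) (hr : 0 ≤ r) (hs : 0 ≤ s) (hμ : 0 < μ) (c : ℝ) :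
    r * (shrinkFactor p r s μ * c) ^ 2 + p * (shrinkFactor p r s μ * c - c) ^ 2 ≤ r * c ^ 2 := by
  set Λ := shrinkFactor p r s μ
  have hD : 0 < (p + r) * s + μ := by positivity
  have hmul : Λ * ((p + r) * s + μ) = p * s + μ := shrinkFactor_mul_denom hp hr hs hμ
  have hpΛ : p ≤ (p + r) * Λ := by
    refine le_of_mul_le_mul_right ?_ hD
    rw [mul_assoc, hmul]
    nlinarith
  have hΛ1 : 0 ≤ 1 - Λ := sub_nonneg.2 (shrinkFactor_le_one hp hr hs hμ.le)
  -- the slack is `(1 - Λ) ((p + r) Λ + r - p) c²`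
  nlinarith [mul_nonneg (mul_nonneg hΛ1 (by linarith : 0 ≤ (p + r) * Λ + r - p)) (sq_nonneg c)]

theorem objective_shrinkFactor (hp : 0 ≤ p) (hr : 0 ≤ r) (hs : 0 ≤ s) (hμ : 0 < μ) {c : ℝ}
    (hc : c ≤ 0) :
    s * (r * (shrinkFactor p r s μ * c) ^ 2 + p * (shrinkFactor p r s μ * c - c) ^ 2) +
        μ * (max (-(shrinkFactor p r s μ * c)) 0 + c) ^ 2 =
      s * r * shrinkFactor p r s μ * c ^ 2 := by
  have hΛc : shrinkFactor p r s μ * c ≤ 0 :=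
    mul_nonpos_of_nonneg_of_nonpos (shrinkFactor_nonneg hp hr hs hμ.le) hc
  rw [max_eq_left (neg_nonneg.2 hΛc)]
  linear_combination (c ^ 2 * (shrinkFactor p r s μ - 1)) * shrinkFactor_mul_denom hp hr hs hμ

theorem le_objective (hp : 0 ≤ p) (hr : 0 ≤ r) (hs : 0 ≤ s) (hμ : 0 < μ) {c : ℝ} (hc : c ≤ 0)
    (z : ℝ) :
    s * r * shrinkFactor p r s μ * c ^ 2 ≤
      s * (r * z ^ 2 + p * (z - c) ^ 2) + μ * (max (-z) 0 + c) ^ 2 := by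
  set Λ := shrinkFactor p r s μ
  have hmul : Λ * ((p + r) * s + μ) = p * s + μ := shrinkFactor_mul_denom hp hr hs hμ
  rcases le_or_gt z 0 with hz | hz
  · rw [max_eq_left (neg_nonneg.2 hz)]
    have hsquare : s * (r * z ^ 2 + p * (z - c) ^ 2) + μ * (-z + c) ^ 2 =
        ((p + r) * s + μ) * (z - Λ * c) ^ 2 + s * r * Λ * c ^ 2 := by
      linear_combination (2 * c * z - c ^ 2 * (1 + Λ)) * hmul
    have hD : 0 ≤ (p + r) * s + μ := by positivity
    nlinarith [mul_nonneg hD (sq_nonneg (z - Λ * c))]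
  · rw [max_eq_right (neg_nonpos.2 hz.le), zero_add]
    have hΛ : s * r * Λ ≤ s * p + μ := by
      nlinarith [mul_nonneg (shrinkFactor_nonneg hp hr hs hμ.le) (by positivity : 0 ≤ p * s + μ)]
    have hzc : c ^ 2 ≤ (z - c) ^ 2 := by nlinarith
    nlinarith [mul_le_mul_of_nonneg_left hzc (mul_nonneg hs hp),
      mul_nonneg hs (mul_nonneg hr (sq_nonneg z)), mul_le_mul_of_nonneg_right hΛ (sq_nonneg c)]

theorem le_objective_of_min_le (hp : 0 ≤ p) (hr : 0 ≤ r) (hs : 0 ≤ s) (hμ : 0 < μ) {h c : ℝ}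
    (hc : c ≤ 0) {F : ℝ → ℝ} (hF : ∀ q, s * min q (h + r * c ^ 2) ≤ F q) (z : ℝ) :
    (h + r * shrinkFactor p r s μ * c ^ 2) * s ≤
      F (h + r * z ^ 2 + p * (z - c) ^ 2) + μ * (max (-z) 0 + c) ^ 2 := by
  have hFz := hF (h + r * z ^ 2 + p * (z - c) ^ 2)
  rcases min_cases (h + r * z ^ 2 + p * (z - c) ^ 2) (h + r * c ^ 2) with ⟨hmin, -⟩ | ⟨hmin, -⟩
    <;> rw [hmin] at hFz
  · linarith [le_objective hp hr hs hμ hc z]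
  · have hΛ1 := shrinkFactor_le_one hp hr hs hμ.le
    nlinarith [mul_le_mul_of_nonneg_left hΛ1 (mul_nonneg hs (mul_nonneg hr (sq_nonneg c))),
      mul_nonneg hμ.le (sq_nonneg (max (-z) 0 + c))]

end ShrinkFactor

theorem second_best_small_cost_regime_general
    (d : ℕ) (σ lam : Fin d → ℝ)
    (hlam : ∀ j, 0 < lam j)
    (ε : ℝ) (hε : ε ∈ Set.Ioo (0 : ℝ) 1)
    (φ : ℝ → ℝ)
    (hφ : φ = fun x =>
      if x ≤ 1 then x else if x < (ε ^ 2)⁻¹ then 2 * Real.sqrt x - 1 else ε * x + ε⁻¹ - 1)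
    (F₀ : ℝ → ℝ) (hF₀ : F₀ = fun q => ∑ j, (σ j) ^ 2 / lam j * φ (lam j * q))
    (s : ℝ) (hs : s = ∑ j, (σ j) ^ 2)
    (lamb : ℝ) (hlamb : IsGreatest (Set.range lam) lamb)
    (μbar p r h c : ℝ) (hμbar : 0 < μbar) (hp : 0 < p) (hr : 0 < r)
    (hc : c ≤ 0)
    (Λ : ℝ) (hΛ : Λ = (p * s + μbar) / ((p + r) * s + μbar))
    (hsmall : h + r * c ^ 2 ≤ 1 / lamb)
    (G : ℝ → ℝ)
    (hG : G = fun z =>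
      F₀ (h + r * z ^ 2 + p * (z - c) ^ 2) + μbar * (max (-z) 0 + c) ^ 2) :
    (∀ z : ℝ, G (Λ * c) ≤ G z) ∧
      sInf (Set.range G) = (h + r * Λ * c ^ 2) * s := by
  have hs0 : 0 ≤ s := hs ▸ sum_nonneg fun j _ => sq_nonneg (σ j)
  obtain ⟨j₀, hj₀⟩ := hlamb.1
  have hlam_mul : ∀ t ≤ 1 / lamb, ∀ j, lam j * t ≤ 1 := fun t ht j =>
    mul_le_one_of_le_one_div (hlam j).le (hlamb.2 ⟨j, rfl⟩) (hj₀ ▸ hlam j₀) ht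
  have hF₀_eq : ∀ q ≤ 1 / lamb, F₀ q = s * q := fun q hq => by
    rw [hF₀, hφ, hs]
    exact sum_div_mul_phi_of_le_one (fun j => (hlam j).ne') (hlam_mul q hq)
  have hF₀_ge : ∀ q, s * min q (h + r * c ^ 2) ≤ F₀ q := fun q => by
    rw [hF₀, hφ, hs]
    exact sum_mul_le_sum_div_mul_phi hε.1 hε.2.le (fun j => sq_nonneg (σ j)) hlam
      (hlam_mul _ ((min_le_right _ _).trans hsmall)) (min_le_left _ _)
  replace hΛ : Λ = shrinkFactor p r s μbar := hΛ
  subst hΛ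
  have hval : G (shrinkFactor p r s μbar * c) = (h + r * shrinkFactor p r s μbar * c ^ 2) * s := by
    have hq : h + r * (shrinkFactor p r s μbar * c) ^ 2 + p * (shrinkFactor p r s μbar * c - c) ^ 2
        ≤ 1 / lamb := by linarith [cost_shrinkFactor_le hp.le hr.le hs0 hμbar c]
    simp only [hG, hF₀_eq _ hq]
    linear_combination objective_shrinkFactor hp.le hr.le hs0 hμbar hc
  have hbound : ∀ z, (h + r * shrinkFactor p r s μbar * c ^ 2) * s ≤ G z := fun z => by
    simpa only [hG] using le_objective_of_min_le hp.le hr.le hs0 hμbar hc hF₀_ge z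
  have hleast : IsLeast (Set.range G) ((h + r * shrinkFactor p r s μbar * c ^ 2) * s) :=
    ⟨⟨_, hval⟩, Set.forall_mem_range.2 hbound⟩
  exact ⟨fun z => hval.trans_le (hbound z), hleast.csInf_eq⟩

/-- In the small-cost regime `h + rc² ≤ 1/λ̄` (with `c ≤ 0`),
`inf_z { F₀(h + rz² + p(z−c)²) + μ̄(z⁻+c)² } = (h + rΛc²)s`, attained at `z = Λc`,
where `Λ = (ps+μ̄)/((p+r)s+μ̄)`. -/
theorem second_best_small_cost_regime
    (d : ℕ) (hd : 1 ≤ d) (σ lam : Fin d → ℝ)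
    (hσ : ∀ j, 0 < σ j) (hlam : ∀ j, 0 < lam j)
    (ε : ℝ) (hε : ε ∈ Set.Ioo (0 : ℝ) 1)
    (φ : ℝ → ℝ)
    (hφ : φ = fun x =>
      if x ≤ 1 then x else if x < (ε ^ 2)⁻¹ then 2 * Real.sqrt x - 1 else ε * x + ε⁻¹ - 1)
    (F₀ : ℝ → ℝ) (hF₀ : F₀ = fun q => ∑ j, (σ j) ^ 2 / lam j * φ (lam j * q))
    (s : ℝ) (hs : s = ∑ j, (σ j) ^ 2)
    (lamb : ℝ) (hlamb : IsGreatest (Set.range lam) lamb)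
    (μbar p r h c : ℝ) (hμbar : 0 < μbar) (hp : 0 < p) (hr : 0 < r) (hh : 0 ≤ h)
    (hc : c ≤ 0)
    (Λ : ℝ) (hΛ : Λ = (p * s + μbar) / ((p + r) * s + μbar))
    (hsmall : h + r * c ^ 2 ≤ 1 / lamb)
    (G : ℝ → ℝ)
    (hG : G = fun z =>
      F₀ (h + r * z ^ 2 + p * (z - c) ^ 2) + μbar * (max (-z) 0 + c) ^ 2) :
    (∀ z : ℝ, G (Λ * c) ≤ G z) ∧
      sInf (Set.range G) = (h + r * Λ * c ^ 2) * s :=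
  second_best_small_cost_regime_general d σ lam hlam ε hε φ hφ F₀ hF₀ s hs lamb hlamb μbar p r h c
    hμbar hp hr hc Λ hΛ hsmall G hG
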